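/- Consider the SIS model under multi-layer Markovian mobility, with F* = F(v) and L* = L(v). If μ(B F* − D − L*) ≤ 0, where μ(G) is the largest real part of an eigenvalue of G, then for each patch i ∈ {1,…,n} there exists a class α ∈ {1,…,m} such that δ_i > β_i − ν^α_i, where ν^α_i = Σ_{j≠i} q^α_{ij} is the total transition rate out of patch i in layer α. -/

import Mathlib

open Matrix Finset Filter

namespace SISMobility

/-- Index type for (class, patch) pairs: `(α, i)` with `α ∈ {1,…,m}` a class and
`i ∈ {1,…,n}` a patch. -/
abbrev Idx (n m : ℕ) := Fin m × Fin n

/-- A CTMC generator matrix: nonnegative off-diagonal entries and zero row sums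
(so that the diagonal entry is minus the total outgoing rate). -/
def IsGenerator {n : ℕ} (Q : Matrix (Fin n) (Fin n) ℝ) : Prop :=
  (∀ i j, i ≠ j → 0 ≤ Q i j) ∧ ∀ i, ∑ j, Q i j = 0

/-- Strong connectivity of the digraph on `{1,…,n}` with an edge `(i,j)` whenever
`i ≠ j` and `Q i j > 0`. -/
def StronglyConnected {n : ℕ} (Q : Matrix (Fin n) (Fin n) ℝ) : Prop :=
  ∀ i j : Fin n, Relation.ReflTransGen (fun a b => a ≠ b ∧ 0 < Q a b) i j

/-- The `nm × nm` block-diagonal infection-rate matrix `B` (m copies of `diag β`). -/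
noncomputable def Bmat (n m : ℕ) (β : Fin n → ℝ) : Matrix (Idx n m) (Idx n m) ℝ :=
  Matrix.diagonal fun k => β k.2

/-- The `nm × nm` block-diagonal recovery-rate matrix `D` (m copies of `diag δ`). -/
noncomputable def Dmat (n m : ℕ) (δ : Fin n → ℝ) : Matrix (Idx n m) (Idx n m) ℝ :=
  Matrix.diagonal fun k => δ k.2

/-- The block-diagonal mobility matrix `L(x)`: the `α`-block has entries
`l^α_{ii} = ∑_{j≠i} q^α_{ji} x^α_j / x^α_i` and `l^α_{ij} = -q^α_{ji} x^α_j / x^α_i`. -/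
noncomputable def Lmat {n m : ℕ} (Q : Fin m → Matrix (Fin n) (Fin n) ℝ)
    (x : Idx n m → ℝ) : Matrix (Idx n m) (Idx n m) ℝ :=
  fun k l =>
    if k.1 = l.1 then
      if k.2 = l.2 then ∑ j ∈ Finset.univ.filter (· ≠ k.2), Q k.1 j k.2 * x (k.1, j) / x k
      else -(Q k.1 l.2 k.2 * x (k.1, l.2) / x k)
    else 0

/-- The population-fraction matrix `F(x)`: entry `((α,i),(γ,j))` equals
`x^γ_i / ∑_η x^η_i` if `j = i` and `0` otherwise. -/
noncomputable def Fmat {n m : ℕ} (x : Idx n m → ℝ) : Matrix (Idx n m) (Idx n m) ℝ :=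
  fun k l => if l.2 = k.2 then x (l.1, k.2) / ∑ η : Fin m, x (η, k.2) else 0

/-- Right-hand side of the infection dynamics
`ṗ = (B F(x) − D − L(x)) p − diag(p) B F(x) p`. -/
noncomputable def pRHS {n m : ℕ} (β δ : Fin n → ℝ) (Q : Fin m → Matrix (Fin n) (Fin n) ℝ)
    (x p : Idx n m → ℝ) : Idx n m → ℝ :=
  (Bmat n m β * Fmat x - Dmat n m δ - Lmat Q x).mulVec p -
    (Matrix.diagonal p * (Bmat n m β * Fmat x)).mulVec p

/-- Right-hand side of the mobility dynamics `ẋ^α = (Q^α)ᵀ x^α`. -/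
noncomputable def xRHS {n m : ℕ} (Q : Fin m → Matrix (Fin n) (Fin n) ℝ)
    (x : Idx n m → ℝ) : Idx n m → ℝ :=
  fun k => ∑ j, Q k.1 j k.2 * x (k.1, j)

/-- `(p, x)` is a solution of the SIS model under multi-layer Markovian mobility. -/
def IsSolution {n m : ℕ} (β δ : Fin n → ℝ) (Q : Fin m → Matrix (Fin n) (Fin n) ℝ)
    (p x : ℝ → Idx n m → ℝ) : Prop :=
  ∀ t : ℝ, 0 ≤ t → ∀ k : Idx n m,
    HasDerivAt (fun s => p s k) (pRHS β δ Q (x t) (p t) k) t ∧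
    HasDerivAt (fun s => x s k) (xRHS Q (x t) k) t

/-- The radial abscissa `μ(G)`: the largest real part of a (complex) eigenvalue of a
real matrix `G`. -/
noncomputable def muMax {ι : Type*} [Fintype ι] [DecidableEq ι] (G : Matrix ι ι ℝ) : ℝ :=
  sSup (Complex.re '' spectrum ℂ (G.map (algebraMap ℝ ℂ)))

/-- The spectral radius `ρ(G)` of a real matrix `G`. -/
noncomputable def specRad {ι : Type*} [Fintype ι] [DecidableEq ι] (G : Matrix ι ι ℝ) : ℝ :=
  sSup ((fun z : ℂ => ‖z‖) '' spectrum ℂ (G.map (algebraMap ℝ ℂ)))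

/-- The fixed-point map `H(p) = (I + A(diag p + (I − diag p) M))⁻¹ A p`. -/
noncomputable def Hfun {n m : ℕ} (A M : Matrix (Idx n m) (Idx n m) ℝ)
    (p : Idx n m → ℝ) : Idx n m → ℝ :=
  ((1 + A * (Matrix.diagonal p + (1 - Matrix.diagonal p) * M))⁻¹).mulVec (A.mulVec p)

end SISMobility

open SISMobility

/-!
Suppose `β i₀ - ν^α_{i₀} ≥ δ i₀` for every class `α`; we show that `M = B F* - D - L*` has an
eigenvalue with positive real part. The matrix `M` is Metzler, and since `v` is stationary the
diagonal of `L*` is the exit rate `ν`, so in each row `(α, i₀)` the entries in the columns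
`(γ, i₀)` sum to `β i₀ - δ i₀ - ν^α_{i₀} ≥ 0`. Let `d (α, i)` be the distance from `i₀` to `i` in
the mobility graph of class `α`. Every row of `M` has a positive entry towards a neighbour one
step closer to `i₀` (rows `(α, i₀)`: towards any neighbour of `i₀`), so for small `t > 0` the
vector `w = t ^ d` satisfies `M w ≥ ε w` with `ε > 0`.

For small `h > 0` the matrix `A = 1 + h M` is nonnegative with `A w ≥ (1 + h ε) w`, hence
`‖A ^ j‖ ≥ (1 + h ε) ^ j`, and Gelfand's formula yields an eigenvalue `1 + h μ` of `A` of modulus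
at least `1 + h ε`. Since `|μ| ≤ ‖M‖`, this forces `Re μ ≥ ε / 2`.
-/

open scoped Pointwise

namespace Relation

variable {α : Type*} {r : α → α → Prop} {a : α}

def ReachWithin (r : α → α → Prop) (a : α) : ℕ → α → Prop
  | 0 => (· = a)
  | k + 1 => fun b => ReachWithin r a k b ∨ ∃ c, ReachWithin r a k c ∧ r c b

theorem ReflTransGen.exists_reachWithin {b : α} (h : ReflTransGen r a b) :
    ∃ k, ReachWithin r a k b := by
  induction h with
  | refl => exact ⟨0, rfl⟩
  | tail _ hcb ih =>
    obtain ⟨k, hk⟩ := ih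
    exact ⟨k + 1, Or.inr ⟨_, hk, hcb⟩⟩

theorem exists_rank_of_forall_reflTransGen (h : ∀ b, ReflTransGen r a b) :
    ∃ d : α → ℕ, (∀ b, d b = 0 ↔ b = a) ∧ ∀ b, b ≠ a → ∃ c, r c b ∧ d c < d b := by
  classical
  have hex : ∀ b, ∃ k, ReachWithin r a k b := fun b => (h b).exists_reachWithin
  refine ⟨fun b => Nat.find (hex b), fun b => Nat.find_eq_zero (hex b), fun b hb => ?_⟩
  obtain ⟨k, hk⟩ : ∃ k, Nat.find (hex b) = k + 1 :=
    Nat.exists_eq_succ_of_ne_zero fun h0 => hb ((Nat.find_eq_zero (hex b)).1 h0)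
  have hspec := Nat.find_spec (hex b)
  rw [hk] at hspec
  rcases hspec with hkb | ⟨c, hkc, hcb⟩
  · exact absurd hkb (Nat.find_min (hex b) (show k < Nat.find (hex b) by omega))
  · exact ⟨c, hcb, (Nat.find_le hkc).trans_lt (show k < Nat.find (hex b) by omega)⟩

end Relation

theorem spectrum.exists_eq_one_add_mul_of_mem {𝕜 A : Type*} [Field 𝕜] [Ring A] [Algebra 𝕜 A]
    (a : A) {c z : 𝕜} (hc : c ≠ 0) (hz : z ∈ spectrum 𝕜 (1 + c • a)) :
    ∃ μ ∈ spectrum 𝕜 a, z = 1 + c * μ := by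
  rw [← map_one (algebraMap 𝕜 A), ← spectrum.singleton_add_eq, Set.singleton_add] at hz
  obtain ⟨y, hy, rfl⟩ := hz
  have := spectrum.unit_smul_eq_smul a (Units.mk0 c hc)
  rw [Units.smul_mk0, Units.smul_mk0] at this
  rw [this] at hy
  obtain ⟨μ, hμ, rfl⟩ := hy
  exact ⟨μ, hμ, by simp⟩

theorem Complex.half_le_re_of_le_norm_one_add_mul {μ : ℂ} {h ε : ℝ} (hh : 0 < h)
    (hμ : h * ‖μ‖ ^ 2 ≤ ε) (hz : 1 + h * ε ≤ ‖1 + h * μ‖) : ε / 2 ≤ μ.re := by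
  have hε : 0 ≤ ε := (mul_nonneg hh.le (sq_nonneg _)).trans hμ
  have hsq : ‖1 + h * μ‖ ^ 2 = 1 + 2 * h * μ.re + h ^ 2 * ‖μ‖ ^ 2 := by
    rw [Complex.sq_norm, Complex.sq_norm, Complex.normSq_apply, Complex.normSq_apply]
    simp only [Complex.add_re, Complex.add_im, Complex.mul_re, Complex.mul_im, Complex.ofReal_re,
      Complex.ofReal_im, Complex.one_re, Complex.one_im]
    ring
  have := pow_le_pow_left₀ (by positivity) hz 2
  rw [hsq] at this
  have key : h * ε ≤ h * (2 * μ.re) := by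
    nlinarith [mul_le_mul_of_nonneg_left hμ hh.le,
      mul_nonneg hh.le (mul_nonneg hh.le (sq_nonneg ε))]
  linarith [le_of_mul_le_mul_left key hh]

namespace Matrix

variable {ι : Type*}

def IsMetzler (M : Matrix ι ι ℝ) : Prop := ∀ i j, i ≠ j → 0 ≤ M i j

theorem IsMetzler.one_add_smul_nonneg [DecidableEq ι] {M : Matrix ι ι ℝ} (hM : M.IsMetzler)
    {h : ℝ} (hh : 0 ≤ h) (hhM : ∀ k, h * |M k k| ≤ 1) (k l : ι) : 0 ≤ (1 + h • M) k l := by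
  rcases eq_or_ne k l with rfl | hkl
  · simp only [add_apply, one_apply_eq, smul_apply, smul_eq_mul]
    nlinarith [neg_abs_le (M k k), hhM k]
  · simpa [one_apply_ne hkl] using mul_nonneg hh (hM k l hkl)

variable [Fintype ι]

theorem IsMetzler.sum_mul_le_mulVec {M : Matrix ι ι ℝ} (hM : M.IsMetzler) {w : ι → ℝ}
    (hw : 0 ≤ w) {k : ι} {s : Finset ι} (hk : k ∈ s) : ∑ l ∈ s, M k l * w l ≤ (M *ᵥ w) k :=
  Finset.sum_le_sum_of_subset_of_nonneg (Finset.subset_univ s) fun l _ hl =>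
    mul_nonneg (hM k l (ne_of_mem_of_not_mem hk hl)) (hw l)

theorem IsMetzler.smul_le_mulVec_pow_rank {M : Matrix ι ι ℝ} (hM : M.IsMetzler) {d : ι → ℕ}
    (hroot : ∀ k, d k = 0 → 0 ≤ ∑ l ∈ univ.filter (fun l => d l = 0), M k l) {p : ι → ι}
    (hp_root : ∀ k, d k = 0 → d (p k) ≠ 0) (hp_desc : ∀ k, d k ≠ 0 → d (p k) < d k)
    {κ R t : ℝ} {D : ℕ} (hκ0 : 0 ≤ κ) (hκ : ∀ k, κ ≤ M k (p k)) (hR : ∀ k, -R ≤ M k k)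
    (hD : ∀ k, d k ≤ D) (ht : 0 < t) (ht1 : t ≤ 1) (htκ : t * (R + κ) ≤ κ) :
    (κ * t ^ D) • (fun k => t ^ d k) ≤ M *ᵥ fun k => t ^ d k := by
  classical
  have hw : (0 : ι → ℝ) ≤ fun k => t ^ d k := fun k => (pow_pos ht _).le
  intro k
  simp only [Pi.smul_apply, smul_eq_mul]
  by_cases hk : d k = 0
  · have hinflow : κ * t ^ D ≤ M k (p k) * t ^ d (p k) :=
      mul_le_mul (hκ k) (pow_le_pow_of_le_one ht.le ht1 (hD _)) (by positivity) (hκ0.trans (hκ k))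
    have hmem : k ∈ insert (p k) (univ.filter fun l => d l = 0) := by simp [hk]
    have hroots : ∑ l ∈ univ.filter (fun l => d l = 0), M k l * t ^ d l
        = ∑ l ∈ univ.filter (fun l => d l = 0), M k l :=
      Finset.sum_congr rfl fun l hl => by simp [(Finset.mem_filter.1 hl).2]
    have := hM.sum_mul_le_mulVec hw hmem
    rw [Finset.sum_insert (by simp [hp_root k hk]), hroots] at this
    rw [hk, pow_zero, mul_one]
    linarith [hroot k hk]
  · obtain ⟨e, he⟩ : ∃ e, d k = e + 1 := ⟨d k - 1, by omega⟩
    have hpk : d (p k) ≤ e := by have := hp_desc k hk; omega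
    have hne : p k ≠ k := fun h => by rw [h] at hpk; omega
    have := hM.sum_mul_le_mulVec hw (Finset.mem_insert_self k {p k})
    rw [Finset.sum_pair hne.symm, he] at this
    rw [he]
    calc κ * t ^ D * t ^ (e + 1) ≤ κ * t ^ (e + 1) :=
          mul_le_mul_of_nonneg_right (mul_le_of_le_one_right hκ0 (pow_le_one₀ ht.le ht1))
            (by positivity)
      _ ≤ -R * t ^ (e + 1) + κ * t ^ e := by
        have := mul_le_mul_of_nonneg_left htκ (pow_nonneg ht.le e)
        rw [pow_succ]
        nlinarith
      _ ≤ M k k * t ^ (e + 1) + M k (p k) * t ^ d (p k) := by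
        refine add_le_add (mul_le_mul_of_nonneg_right (hR k) (by positivity)) ?_
        exact (mul_le_mul_of_nonneg_right (hκ k) (by positivity)).trans
          (mul_le_mul_of_nonneg_left (pow_le_pow_of_le_one ht.le ht1 hpk) (hκ0.trans (hκ k)))
      _ ≤ (M *ᵥ fun k => t ^ d k) k := this

theorem IsMetzler.exists_smul_le_mulVec_of_rank [Nonempty ι] {M : Matrix ι ι ℝ}
    (hM : M.IsMetzler) (d : ι → ℕ)
    (hroot : ∀ k, d k = 0 → 0 ≤ ∑ l ∈ univ.filter (fun l => d l = 0), M k l)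
    (hroot_edge : ∀ k, d k = 0 → ∃ l, d l ≠ 0 ∧ 0 < M k l)
    (hdesc : ∀ k, d k ≠ 0 → ∃ l, d l < d k ∧ 0 < M k l) :
    ∃ w : ι → ℝ, (∀ k, 0 < w k) ∧ ∃ ε : ℝ, 0 < ε ∧ ε • w ≤ M *ᵥ w := by
  have hedge : ∀ k, ∃ l, 0 < M k l ∧ (d k = 0 → d l ≠ 0) ∧ (d k ≠ 0 → d l < d k) := by
    intro k
    by_cases hk : d k = 0
    · obtain ⟨l, hl, hMl⟩ := hroot_edge k hk
      exact ⟨l, hMl, fun _ => hl, fun h => absurd hk h⟩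
    · obtain ⟨l, hl, hMl⟩ := hdesc k hk
      exact ⟨l, hMl, fun h => absurd h hk, fun _ => hl⟩
  choose p hp using hedge
  obtain ⟨k₁, hk₁⟩ := Finite.exists_min fun k => M k (p k)
  obtain ⟨k₂, hk₂⟩ := Finite.exists_max d
  set κ := M k₁ (p k₁)
  have hκ : 0 < κ := (hp k₁).1
  set R := ∑ k, |M k k|
  have hR : ∀ k, -R ≤ M k k := fun k =>
    (neg_le_neg (Finset.single_le_sum (fun k _ => abs_nonneg (M k k)) (mem_univ k))).trans
      (neg_abs_le _)
  have hR0 : 0 ≤ R := Finset.sum_nonneg fun k _ => abs_nonneg _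
  set t := min 1 (κ / (R + κ + 1))
  have ht : 0 < t := lt_min one_pos (by positivity)
  have htκ : t * (R + κ) ≤ κ := by
    have := min_le_right 1 (κ / (R + κ + 1))
    rw [le_div_iff₀ (by positivity)] at this
    nlinarith
  exact ⟨fun k => t ^ d k, fun k => pow_pos ht _, κ * t ^ d k₂, by positivity,
    hM.smul_le_mulVec_pow_rank hroot (fun k => (hp k).2.1) (fun k => (hp k).2.2) hκ.le hk₁ hR
      hk₂ ht (min_le_left _ _) htκ⟩

theorem mulVec_mono_of_nonneg {A : Matrix ι ι ℝ} (hA : ∀ k l, 0 ≤ A k l) {u w : ι → ℝ}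
    (h : u ≤ w) : A *ᵥ u ≤ A *ᵥ w :=
  fun k => Finset.sum_le_sum fun l _ => mul_le_mul_of_nonneg_left (h l) (hA k l)

variable [DecidableEq ι]

theorem pow_smul_le_pow_mulVec {A : Matrix ι ι ℝ} (hA : ∀ k l, 0 ≤ A k l) {r : ℝ} (hr : 0 ≤ r)
    {w : ι → ℝ} (hAw : r • w ≤ A *ᵥ w) (j : ℕ) : r ^ j • w ≤ (A ^ j) *ᵥ w := by
  induction j with
  | zero => simp
  | succ j ih =>
    calc r ^ (j + 1) • w = r ^ j • (r • w) := by rw [pow_succ, mul_smul]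
      _ ≤ r ^ j • (A *ᵥ w) := smul_le_smul_of_nonneg_left hAw (pow_nonneg hr j)
      _ = A *ᵥ (r ^ j • w) := (mulVec_smul A _ w).symm
      _ ≤ A *ᵥ (A ^ j *ᵥ w) := mulVec_mono_of_nonneg hA ih
      _ = A ^ (j + 1) *ᵥ w := by rw [mulVec_mulVec, ← pow_succ']

section LinftyOpNorm

attribute [local instance] Matrix.linftyOpNormedRing Matrix.linftyOpNormedAlgebra

theorem ofReal_le_spectralRadius_of_nonneg {A : Matrix ι ι ℝ} (hA : ∀ k l, 0 ≤ A k l) {r : ℝ}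
    (hr : 0 ≤ r) {w : ι → ℝ} (hw : 0 ≤ w) (hw0 : w ≠ 0) (hAw : r • w ≤ A *ᵥ w) :
    ENNReal.ofReal r ≤ spectralRadius ℂ (A.map (algebraMap ℝ ℂ)) := by
  obtain ⟨k, hk⟩ : ∃ k, 0 < w k := by
    by_contra! h
    exact hw0 (funext fun k => le_antisymm (h k) (hw k))
  have : Nonempty ι := ⟨k⟩
  obtain ⟨kmax, hkmax⟩ := Finite.exists_max w
  have hwmax : 0 < w kmax := hk.trans_le (hkmax k)
  have hnorm_w : ‖(algebraMap ℝ ℂ) ∘ w‖ = w kmax := by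
    refine le_antisymm ((pi_norm_le_iff_of_nonneg hwmax.le).2 fun l => ?_) ?_
    · simpa [abs_of_nonneg (hw l)] using hkmax l
    · simpa [abs_of_nonneg hwmax.le] using norm_le_pi_norm ((algebraMap ℝ ℂ) ∘ w) kmax
  have hpow : ∀ j : ℕ, r ^ j ≤ ‖A.map (algebraMap ℝ ℂ) ^ j‖ := by
    intro j
    have hAj : 0 ≤ (A ^ j *ᵥ w) kmax :=
      (mul_nonneg (pow_nonneg hr j) hwmax.le).trans (pow_smul_le_pow_mulVec hA hr hAw j kmax)
    have := calc r ^ j * w kmax ≤ (A ^ j *ᵥ w) kmax := pow_smul_le_pow_mulVec hA hr hAw j kmax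
      _ = ‖(A.map (algebraMap ℝ ℂ) ^ j *ᵥ (algebraMap ℝ ℂ) ∘ w) kmax‖ := by
        rw [← Matrix.map_pow, ← RingHom.map_mulVec]; simp [abs_of_nonneg hAj]
      _ ≤ ‖A.map (algebraMap ℝ ℂ) ^ j *ᵥ (algebraMap ℝ ℂ) ∘ w‖ := norm_le_pi_norm _ kmax
      _ ≤ ‖A.map (algebraMap ℝ ℂ) ^ j‖ * w kmax := hnorm_w ▸ linfty_opNorm_mulVec _ _
    exact le_of_mul_le_mul_right this hwmax
  refine ge_of_tendsto (spectrum.pow_norm_pow_one_div_tendsto_nhds_spectralRadius _) ?_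
  filter_upwards [eventually_ne_atTop 0] with j hj
  refine ENNReal.ofReal_le_ofReal ?_
  calc r = (r ^ j) ^ (1 / j : ℝ) := by rw [one_div, Real.pow_rpow_inv_natCast hr hj]
    _ ≤ _ := Real.rpow_le_rpow (pow_nonneg hr j) (hpow j) (by positivity)

theorem le_muMax {M : Matrix ι ι ℝ} {μ : ℂ} (hμ : μ ∈ spectrum ℂ (M.map (algebraMap ℝ ℂ))) :
    μ.re ≤ muMax M :=
  le_csSup ((spectrum.isCompact _).image Complex.continuous_re).bddAbove ⟨μ, hμ, rfl⟩

theorem IsMetzler.exists_half_le_re {M : Matrix ι ι ℝ} (hM : M.IsMetzler) {w : ι → ℝ}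
    (hw : 0 ≤ w) (hw0 : w ≠ 0) {ε : ℝ} (hε : 0 < ε) (hMw : ε • w ≤ M *ᵥ w) :
    ∃ μ ∈ spectrum ℂ (M.map (algebraMap ℝ ℂ)), ε / 2 ≤ μ.re := by
  obtain ⟨k₀, -⟩ := Function.ne_iff.1 hw0
  have : Nonempty ι := ⟨k₀⟩
  set Mc := M.map (algebraMap ℝ ℂ)
  obtain ⟨h, hh, hhM, hhK⟩ : ∃ h : ℝ, 0 < h ∧ (∀ k, h * |M k k| ≤ 1) ∧ h * ‖Mc‖ ^ 2 ≤ ε := by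
    set R := ∑ k, |M k k|
    have hR : 0 ≤ R := Finset.sum_nonneg fun k _ => abs_nonneg _
    refine ⟨min (1 / (R + 1)) (ε / (‖Mc‖ ^ 2 + 1)), lt_min (by positivity) (by positivity),
      fun k => ?_, ?_⟩
    · have h₁ := min_le_left (1 / (R + 1)) (ε / (‖Mc‖ ^ 2 + 1))
      have h₂ := Finset.single_le_sum (fun k _ => abs_nonneg (M k k)) (Finset.mem_univ k)
      rw [le_div_iff₀ (by positivity)] at h₁
      have h₀ : 0 ≤ min (1 / (R + 1)) (ε / (‖Mc‖ ^ 2 + 1)) := by positivity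
      nlinarith [mul_le_mul_of_nonneg_left h₂ h₀]
    · have h₁ := min_le_right (1 / (R + 1)) (ε / (‖Mc‖ ^ 2 + 1))
      rw [le_div_iff₀ (by positivity)] at h₁
      nlinarith
  have hAw : (1 + h * ε) • w ≤ (1 + h • M) *ᵥ w := by
    intro k
    have := mul_le_mul_of_nonneg_left (hMw k) hh.le
    simp only [Pi.smul_apply, smul_eq_mul, add_mulVec, one_mulVec, smul_mulVec,
      Pi.add_apply] at this ⊢
    nlinarith
  obtain ⟨z, hz, hzρ⟩ :=
    spectrum.exists_nnnorm_eq_spectralRadius ((1 + h • M).map (algebraMap ℝ ℂ))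
  have hzr : 1 + h * ε ≤ ‖z‖ := by
    have := ofReal_le_spectralRadius_of_nonneg (hM.one_add_smul_nonneg hh.le hhM)
      (by positivity) hw hw0 hAw
    rw [← hzρ, ← enorm_eq_nnnorm, ← ofReal_norm] at this
    exact (ENNReal.ofReal_le_ofReal_iff (norm_nonneg _)).1 this
  have hmap : (1 + h • M).map (algebraMap ℝ ℂ) = 1 + (h : ℂ) • Mc := by
    ext k l
    rcases eq_or_ne k l with rfl | hkl <;> simp [Mc, one_apply_ne, *]
  rw [hmap] at hz
  obtain ⟨μ, hμ, rfl⟩ :=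
    spectrum.exists_eq_one_add_mul_of_mem Mc (Complex.ofReal_ne_zero.2 hh.ne') hz
  have hμK : h * ‖μ‖ ^ 2 ≤ ε :=
    le_trans (by gcongr; exact spectrum.norm_le_norm_of_mem hμ) hhK
  exact ⟨μ, hμ, Complex.half_le_re_of_le_norm_one_add_mul hh hμK hzr⟩

theorem IsMetzler.muMax_pos {M : Matrix ι ι ℝ} (hM : M.IsMetzler) {w : ι → ℝ} (hw : 0 ≤ w)
    (hw0 : w ≠ 0) {ε : ℝ} (hε : 0 < ε) (hMw : ε • w ≤ M *ᵥ w) : 0 < muMax M := by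
  obtain ⟨μ, hμ, hre⟩ := hM.exists_half_le_re hw hw0 hε hMw
  linarith [le_muMax hμ]

end LinftyOpNorm

end Matrix

namespace SISMobility

variable {n m : ℕ}

def outRate (Q : Matrix (Fin n) (Fin n) ℝ) (i : Fin n) : ℝ := ∑ j ∈ univ.filter (· ≠ i), Q i j

/-- The Jacobian of `pRHS` at the disease-free state `p = 0`. -/
noncomputable def dfeJacobian (β δ : Fin n → ℝ) (Q : Fin m → Matrix (Fin n) (Fin n) ℝ)
    (x : Idx n m → ℝ) : Matrix (Idx n m) (Idx n m) ℝ :=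
  Bmat n m β * Fmat x - Dmat n m δ - Lmat Q x

theorem IsGenerator.diag_eq {Q : Matrix (Fin n) (Fin n) ℝ} (hQ : IsGenerator Q) (i : Fin n) :
    Q i i = -outRate Q i := by
  have := Finset.sum_erase_add univ (Q i) (mem_univ i)
  rw [hQ.2 i, ← Finset.filter_ne'] at this
  rw [outRate]
  linarith

theorem IsGenerator.inflow_eq_outflow {Q : Matrix (Fin n) (Fin n) ℝ} (hQ : IsGenerator Q)
    {x : Fin n → ℝ} (hx : ∀ i, ∑ j, Q j i * x j = 0) (i : Fin n) :
    ∑ j ∈ univ.filter (· ≠ i), Q j i * x j = outRate Q i * x i := by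
  have := Finset.sum_erase_add univ (fun j => Q j i * x j) (mem_univ i)
  rw [hx i, ← Finset.filter_ne', hQ.diag_eq] at this
  linarith

variable {Q : Fin m → Matrix (Fin n) (Fin n) ℝ} {x : Idx n m → ℝ}

theorem Lmat_apply_self (hQ : ∀ α, IsGenerator (Q α)) (hx : ∀ α i, ∑ j, Q α j i * x (α, j) = 0)
    (hx0 : ∀ k, x k ≠ 0) (k : Idx n m) : Lmat Q x k k = outRate (Q k.1) k.2 := by
  simp only [Lmat, if_true]
  rw [← Finset.sum_div, (hQ k.1).inflow_eq_outflow (hx k.1), mul_div_assoc, div_self (hx0 k),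
    mul_one]

theorem Lmat_apply_of_ne {α : Fin m} {i j : Fin n} (h : i ≠ j) :
    Lmat Q x (α, i) (α, j) = -(Q α j i * x (α, j) / x (α, i)) := by
  simp [Lmat, h]

theorem Lmat_apply_of_fst_ne {k l : Idx n m} (h : k.1 ≠ l.1) : Lmat Q x k l = 0 := by
  simp [Lmat, h]

variable {β δ : Fin n → ℝ}

theorem Bmat_mul_Fmat_apply (k l : Idx n m) :
    (Bmat n m β * Fmat x) k l = β k.2 * Fmat x k l := by
  rw [Bmat, diagonal_mul]

theorem isMetzler_dfeJacobian (hβ : ∀ i, 0 ≤ β i) (hQ : ∀ α, IsGenerator (Q α))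
    (hx : ∀ k, 0 ≤ x k) : (dfeJacobian β δ Q x).IsMetzler := by
  rintro ⟨α, i⟩ ⟨γ, j⟩ hkl
  have hBF : 0 ≤ (Bmat n m β * Fmat x) (α, i) (γ, j) := by
    rw [Bmat_mul_Fmat_apply]
    refine mul_nonneg (hβ i) ?_
    unfold Fmat
    split_ifs
    · exact div_nonneg (hx _) (Finset.sum_nonneg fun η _ => hx _)
    · exact le_rfl
  have hL : Lmat Q x (α, i) (γ, j) ≤ 0 := by
    rcases eq_or_ne α γ with rfl | hαγ
    · have hij : i ≠ j := fun h => hkl (by rw [h])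
      rw [Lmat_apply_of_ne hij, neg_nonpos]
      exact div_nonneg (mul_nonneg ((hQ α).1 j i hij.symm) (hx _)) (hx _)
    · exact (Lmat_apply_of_fst_ne hαγ).le
  rw [dfeJacobian, Matrix.sub_apply, Matrix.sub_apply, Dmat, diagonal_apply_ne _ hkl]
  linarith

theorem dfeJacobian_apply_of_ne {α : Fin m} {i j : Fin n} (h : i ≠ j) :
    dfeJacobian β δ Q x (α, i) (α, j) = Q α j i * x (α, j) / x (α, i) := by
  rw [dfeJacobian, Matrix.sub_apply, Matrix.sub_apply, Bmat_mul_Fmat_apply, Lmat_apply_of_ne h,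
    Dmat, diagonal_apply_ne _ (by simp [h])]
  simp [Fmat, Ne.symm h]

theorem dfeJacobian_apply_pos (hx : ∀ k, 0 < x k) {α : Fin m} {i j : Fin n} (h : j ≠ i)
    (hQ : 0 < Q α j i) : 0 < dfeJacobian β δ Q x (α, i) (α, j) := by
  rw [dfeJacobian_apply_of_ne h.symm]
  exact div_pos (mul_pos hQ (hx _)) (hx _)

theorem sum_dfeJacobian_apply_patch [Nonempty (Fin m)] (hQ : ∀ α, IsGenerator (Q α))
    (hx0 : ∀ k, 0 < x k) (hx : ∀ α i, ∑ j, Q α j i * x (α, j) = 0) (α : Fin m) (i : Fin n) :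
    ∑ γ, dfeJacobian β δ Q x (α, i) (γ, i) = β i - δ i - outRate (Q α) i := by
  have hS : ∑ η, x (η, i) ≠ 0 := (Finset.sum_pos (fun η _ => hx0 _) univ_nonempty).ne'
  have hF : ∑ γ, Fmat x (α, i) (γ, i) = 1 := by
    simp only [Fmat, if_true]
    rw [← Finset.sum_div, div_self hS]
  simp only [dfeJacobian, Matrix.sub_apply, Finset.sum_sub_distrib, Bmat_mul_Fmat_apply,
    ← Finset.mul_sum, hF]
  rw [Finset.sum_eq_single α (fun γ _ hγ => by simp [Dmat, hγ.symm]) (by simp),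
    Finset.sum_eq_single α (fun γ _ hγ => Lmat_apply_of_fst_ne hγ.symm) (by simp),
    Lmat_apply_self hQ hx (fun k => (hx0 k).ne')]
  simp [Dmat]

theorem StronglyConnected.exists_ne_pos {Q : Matrix (Fin n) (Fin n) ℝ} (hQ : StronglyConnected Q)
    (hn : 2 ≤ n) (i : Fin n) : ∃ j, j ≠ i ∧ 0 < Q j i := by
  have : Nontrivial (Fin n) := Fin.nontrivial_iff_two_le.mpr hn
  obtain ⟨j₀, hj₀⟩ := exists_ne i
  rcases (hQ j₀ i).cases_tail with h | ⟨j, -, hj⟩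
  · exact absurd h.symm hj₀
  · exact ⟨j, hj⟩

theorem muMax_dfeJacobian_pos (hn : 2 ≤ n) [Nonempty (Fin m)] (hQ : ∀ α, IsGenerator (Q α))
    (hQirr : ∀ α, StronglyConnected (Q α)) (hβ : ∀ i, 0 ≤ β i) (hx0 : ∀ k, 0 < x k)
    (hx : ∀ α i, ∑ j, Q α j i * x (α, j) = 0) {i₀ : Fin n}
    (hi₀ : ∀ α, δ i₀ ≤ β i₀ - outRate (Q α) i₀) : 0 < muMax (dfeJacobian β δ Q x) := by
  have : Nonempty (Fin n) := ⟨⟨0, by omega⟩⟩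
  choose d hd0 hpred using fun α => Relation.exists_rank_of_forall_reflTransGen (hQirr α i₀)
  set M := dfeJacobian β δ Q x
  have hroot : ∀ k : Idx n m, d k.1 k.2 = 0 →
      0 ≤ ∑ l ∈ univ.filter (fun l : Idx n m => d l.1 l.2 = 0), M k l := by
    rintro ⟨α, i⟩ hk
    obtain rfl := (hd0 α i).1 hk
    simp only [Finset.sum_filter, Fintype.sum_prod_type, hd0, Finset.sum_ite_eq', mem_univ,
      if_true, M, sum_dfeJacobian_apply_patch hQ hx0 hx]
    linarith [hi₀ α]
  have hroot_edge : ∀ k : Idx n m, d k.1 k.2 = 0 → ∃ l : Idx n m, d l.1 l.2 ≠ 0 ∧ 0 < M k l := by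
    rintro ⟨α, i⟩ hk
    obtain rfl := (hd0 α i).1 hk
    obtain ⟨j, hji, hQji⟩ := (hQirr α).exists_ne_pos hn i
    exact ⟨(α, j), fun h => hji ((hd0 α j).1 h), dfeJacobian_apply_pos hx0 hji hQji⟩
  have hdesc : ∀ k : Idx n m, d k.1 k.2 ≠ 0 →
      ∃ l : Idx n m, d l.1 l.2 < d k.1 k.2 ∧ 0 < M k l := by
    rintro ⟨α, i⟩ hk
    obtain ⟨j, ⟨hji, hQji⟩, hdj⟩ := hpred α i fun h => hk ((hd0 α i).2 h)
    exact ⟨(α, j), hdj, dfeJacobian_apply_pos hx0 hji hQji⟩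
  have hM := isMetzler_dfeJacobian (δ := δ) hβ hQ fun k => (hx0 k).le
  obtain ⟨w, hw, ε, hε, hMw⟩ :=
    hM.exists_smul_le_mulVec_of_rank (fun k => d k.1 k.2) hroot hroot_edge hdesc
  exact hM.muMax_pos (fun k => (hw k).le)
    (fun h => (hw (Classical.arbitrary _)).ne' (congrFun h _)) hε hMw

end SISMobility

theorem necessary_condition_per_patch_general
    (n m : ℕ) (hn : 2 ≤ n) (hm : 1 ≤ m)
    (Q : Fin m → Matrix (Fin n) (Fin n) ℝ)
    (hQgen : ∀ α, IsGenerator (Q α)) (hQirr : ∀ α, StronglyConnected (Q α))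
    (β δ : Fin n → ℝ) (hβ : ∀ i, 0 < β i)
    (vα : Fin m → Fin n → ℝ) (hvαpos : ∀ α i, 0 < vα α i)
    (hvαeig : ∀ α i, ∑ j, Q α j i * vα α j = 0)
    (Npop : Fin m → ℝ) (hNpop : ∀ α, 0 < Npop α)
    (v : Idx n m → ℝ) (hv : ∀ k, v k = Npop k.1 * vα k.1 k.2)
    (hmu : muMax (Bmat n m β * Fmat v - Dmat n m δ - Lmat Q v) ≤ 0) :
    ∀ i : Fin n, ∃ α : Fin m,
      β i - (∑ j ∈ Finset.univ.filter (· ≠ i), Q α i j) < δ i := by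
  intro i₀
  by_contra! h
  have : Nonempty (Fin m) := ⟨⟨0, hm⟩⟩
  have hv0 : ∀ k, 0 < v k := fun k => hv k ▸ mul_pos (hNpop _) (hvαpos _ _)
  have hstat : ∀ α i, ∑ j, Q α j i * v (α, j) = 0 := fun α i => by
    simp only [hv, mul_left_comm _ (Npop α), ← Finset.mul_sum, hvαeig, mul_zero]
  exact hmu.not_gt (muMax_dfeJacobian_pos hn hQgen hQirr (fun i => (hβ i).le) hv0 hstat h)

/-- Corollary 1 (i): if `μ(B F* − D − L*) ≤ 0`, then for each
patch `i` there exists a class `α` such that `δ_i > β_i − ν^α_i`, where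
`ν^α_i = ∑_{j≠i} q^α_{ij}`. -/
theorem necessary_condition_per_patch
    (n m : ℕ) (hn : 2 ≤ n) (hm : 1 ≤ m)
    (Q : Fin m → Matrix (Fin n) (Fin n) ℝ)
    (hQgen : ∀ α, IsGenerator (Q α)) (hQirr : ∀ α, StronglyConnected (Q α))
    (β δ : Fin n → ℝ) (hβ : ∀ i, 0 < β i) (hδ : ∀ i, 0 ≤ δ i)
    (vα : Fin m → Fin n → ℝ) (hvαpos : ∀ α i, 0 < vα α i)
    (hvαnorm : ∀ α, ∑ i, vα α i = 1)
    (hvαeig : ∀ α i, ∑ j, Q α j i * vα α j = 0)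
    (Npop : Fin m → ℝ) (hNpop : ∀ α, 0 < Npop α)
    (v : Idx n m → ℝ) (hv : ∀ k, v k = Npop k.1 * vα k.1 k.2)
    (hmu : muMax (Bmat n m β * Fmat v - Dmat n m δ - Lmat Q v) ≤ 0) :
    ∀ i : Fin n, ∃ α : Fin m,
      β i - (∑ j ∈ Finset.univ.filter (· ≠ i), Q α i j) < δ i :=
  necessary_condition_per_patch_general n m hn hm Q hQgen hQirr β δ hβ vα hvαpos hvαeig Npop hNpop v
    hv hmu
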